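/- Let A and B be bounded self-adjoint operators on a Hilbert space and H = A + B. Then for all t ∈ ℝ, e^{-itB}e^{-itA} - e^{-itH} = i ∫₀ᵗ e^{-isB}[e^{-isA}, B] e^{-i(t-s)H} ds, where [X,Y] = XY - YX. -/

import Mathlib

open intervalIntegral NormedSpace

section Aux

variable {M : Type*} [NormedRing M] [NormedAlgebra ℂ M] [CompleteSpace M]

private lemma exp_real_deriv (X : M) (s : ℝ) :
    HasDerivAt (fun u : ℝ => exp ((u : ℂ) • X)) (exp ((s : ℂ) • X) * X) s := by
  have h := (hasDerivAt_exp_smul_const (𝕂 := ℂ) X ((s : ℝ) : ℂ)).scomp s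
    Complex.ofRealCLM.hasDerivAt
  simpa [Function.comp_def] using h

private lemma exp_real_deriv_rev (X : M) (t s : ℝ) :
    HasDerivAt (fun u : ℝ => exp (((t - u : ℝ) : ℂ) • X))
      (-(exp (((t - s : ℝ) : ℂ) • X) * X)) s := by
  have hin : HasDerivAt (fun u : ℝ => t - u) (-1 : ℝ) s := by
    simpa using (hasDerivAt_id s).const_sub t
  have h := (exp_real_deriv X (t - s)).scomp s hin
  have h' : HasDerivAt (fun u : ℝ => exp (((t - u : ℝ) : ℂ) • X))
      ((-1 : ℝ) • (exp (((t - s : ℝ) : ℂ) • X) * X)) s := h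
  simpa using h'

private lemma exp_real_cont (X : M) : Continuous fun u : ℝ => exp ((u : ℂ) • X) :=
  continuous_iff_continuousAt.2 fun s => (exp_real_deriv X s).continuousAt

private lemma alg_aux (a b c X Y : M) (h3 : c * (X + Y) = (X + Y) * c) :
    (a * Y * b + a * (b * X)) * c + a * b * -(c * (X + Y))
      = a * (Y * b - b * Y) * c := by
  rw [h3]; noncomm_ring

private lemma trotter_aux (X Y : M) (t : ℝ) :
    exp ((t : ℂ) • Y) * exp ((t : ℂ) • X) - exp ((t : ℂ) • (X + Y))
      = ∫ s in (0 : ℝ)..t,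
          exp ((s : ℂ) • Y) * (Y * exp ((s : ℂ) • X) - exp ((s : ℂ) • X) * Y)
            * exp (((t - s : ℝ) : ℂ) • (X + Y)) := by
  have hΩ : ∀ s ∈ Set.uIcc (0 : ℝ) t,
      HasDerivAt (fun u : ℝ => exp ((u : ℂ) • Y) * exp ((u : ℂ) • X)
          * exp (((t - u : ℝ) : ℂ) • (X + Y)))
        (exp ((s : ℂ) • Y) * (Y * exp ((s : ℂ) • X) - exp ((s : ℂ) • X) * Y)
          * exp (((t - s : ℝ) : ℂ) • (X + Y))) s := by
    intro s _
    have h1 := exp_real_deriv Y s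
    have h2 := exp_real_deriv X s
    have h3 := exp_real_deriv_rev (X + Y) t s
    have h := (h1.mul h2).mul h3
    have hc3 : exp (((t - s : ℝ) : ℂ) • (X + Y)) * (X + Y)
        = (X + Y) * exp (((t - s : ℝ) : ℂ) • (X + Y)) := by
      have := (((Commute.refl (X + Y)).smul_right (((t - s : ℝ) : ℂ))).exp_right)
      exact this.eq.symm
    simp only [Pi.mul_apply] at h
    rw [alg_aux _ _ _ _ _ hc3] at h
    exact h
  have hint : IntervalIntegrable (fun s : ℝ =>
      exp ((s : ℂ) • Y) * (Y * exp ((s : ℂ) • X) - exp ((s : ℂ) • X) * Y)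
        * exp (((t - s : ℝ) : ℂ) • (X + Y))) MeasureTheory.volume 0 t := by
    apply Continuous.intervalIntegrable
    have c1 := exp_real_cont Y
    have c2 := exp_real_cont X
    have c3 : Continuous fun s : ℝ => exp (((t - s : ℝ) : ℂ) • (X + Y)) :=
      continuous_iff_continuousAt.2 fun s => (exp_real_deriv_rev (X + Y) t s).continuousAt
    exact (c1.mul ((continuous_const.mul c2).sub (c2.mul continuous_const))).mul c3
  have key := intervalIntegral.integral_eq_sub_of_hasDerivAt hΩ hint
  rw [key]
  simp

end Aux

/-- Exact local Trotter error representation: for bounded self-adjoint `A, B` on a Hilbert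
space and `H = A + B`, for all `t ∈ ℝ`,
`e^{-itB}e^{-itA} - e^{-itH} = i ∫₀ᵗ e^{-isB}[e^{-isA},B]e^{-i(t-s)H} ds`. -/
theorem stmt_15 {𝓗 : Type*} [NormedAddCommGroup 𝓗] [InnerProductSpace ℂ 𝓗]
    [CompleteSpace 𝓗] (A B : 𝓗 →L[ℂ] 𝓗)
    (hA : IsSelfAdjoint A) (hB : IsSelfAdjoint B) (t : ℝ) :
    exp ((-Complex.I * (t : ℂ)) • B) * exp ((-Complex.I * (t : ℂ)) • A)
      - exp ((-Complex.I * (t : ℂ)) • (A + B))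
    = Complex.I • ∫ s in (0 : ℝ)..t,
        exp ((-Complex.I * (s : ℂ)) • B)
          * (exp ((-Complex.I * (s : ℂ)) • A) * B - B * exp ((-Complex.I * (s : ℂ)) • A))
          * exp ((-Complex.I * ((t - s : ℝ) : ℂ)) • (A + B)) := by
  have earg : ∀ (s : ℂ) (C : 𝓗 →L[ℂ] 𝓗),
      (s : ℂ) • ((-Complex.I) • C) = (-Complex.I * s) • C := by
    intro s C; rw [smul_smul, mul_comm]
  have h := trotter_aux ((-Complex.I) • A) ((-Complex.I) • B) t
  rw [← smul_add] at h
  simp only [earg] at h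
  rw [h, ← intervalIntegral.integral_smul]
  congr 1
  funext s
  simp only [smul_mul_assoc, mul_smul_comm, smul_sub, smul_smul, neg_smul, sub_neg_eq_add,
    neg_neg, neg_mul, mul_neg]
  rw [neg_add_eq_sub, ← smul_sub, mul_smul_comm, smul_mul_assoc]
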